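/- If K and L_γ are symmetric PSD N×N matrices with 0 ⪯ K − L_γ ⪯ (Nγ/(1−t)) I for some γ > 0 and t ∈ (0,1), then for any λ > 0, ‖K(K + NλI)^{-1} − L_γ(L_γ + NλI)^{-1}‖ ≤ (γ/λ)/(1−t). -/

import Mathlib

/-!
Write `M_A = A + c • 1` with `c = N λ`. Since `A M_A⁻¹ = 1 - c M_A⁻¹`, the difference is
`c (M_L⁻¹ - M_K⁻¹) = c M_L⁻¹ (K - L) M_K⁻¹`. For positive semidefinite `A` the quadratic form of `M_A`
dominates `c ‖x‖²`, so `‖M_A⁻¹‖ ≤ c⁻¹`; and `0 ⪯ K - L ⪯ β` with `β = N γ / (1 - t)` bounds every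
Rayleigh quotient of `K - L` by `β`, hence `‖K - L‖ ≤ β`. Altogether the norm is at most `β / c`.
-/

/-- The spectral (operator) norm of a real matrix. -/
noncomputable def specNorm {n : Type*} [Fintype n] [DecidableEq n] (A : Matrix n n ℝ) : ℝ :=
  ‖Matrix.toEuclideanCLM (𝕜 := ℝ) A‖

open scoped Matrix.Norms.L2Operator RealInnerProductSpace

namespace Matrix

variable {n : Type*} [Fintype n] [DecidableEq n]

lemma mul_inv_add_smul_one {R : Type*} [CommRing R] (A : Matrix n n R) (c : R)
    (h : IsUnit (A + c • 1).det) : A * (A + c • 1)⁻¹ = 1 - c • (A + c • 1)⁻¹ := by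
  calc A * (A + c • 1)⁻¹ = (A + c • 1 - c • 1) * (A + c • 1)⁻¹ := by rw [add_sub_cancel_right]
    _ = 1 - c • (A + c • 1)⁻¹ := by rw [sub_mul, mul_nonsing_inv _ h, smul_mul_assoc, one_mul]

lemma mul_inv_add_smul_one_sub {R : Type*} [CommRing R] (A B : Matrix n n R) (c : R)
    (hA : IsUnit (A + c • 1).det) (hB : IsUnit (B + c • 1).det) :
    A * (A + c • 1)⁻¹ - B * (B + c • 1)⁻¹ = c • ((B + c • 1)⁻¹ * (A - B) * (A + c • 1)⁻¹) := by
  rw [mul_inv_add_smul_one A c hA, mul_inv_add_smul_one B c hB, sub_sub_sub_cancel_left,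
    ← smul_sub, inv_sub_inv (by simp only [isUnit_iff_isUnit_det, hA, hB]),
    add_sub_add_right_eq_sub]

lemma PosSemidef.inner_toEuclideanCLM_nonneg {A : Matrix n n ℝ} (hA : A.PosSemidef)
    (x : EuclideanSpace ℝ n) : 0 ≤ ⟪x, toEuclideanCLM (𝕜 := ℝ) A x⟫ := by
  rw [inner_toEuclideanCLM]
  simpa using hA.dotProduct_mulVec_nonneg x.ofLp

lemma PosSemidef.l2_opNorm_le_of_smul_one_sub {A : Matrix n n ℝ} {β : ℝ} (hA : A.PosSemidef)
    (hβ : 0 ≤ β) (hAβ : (β • 1 - A).PosSemidef) : ‖A‖ ≤ β := by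
  set T := toEuclideanCLM (𝕜 := ℝ) A
  rw [cstar_norm_def,
    T.norm_eq_iSup_rayleighQuotient (isSymmetric_toEuclideanLin_iff.mpr hA.isHermitian)]
  refine ciSup_le fun x => ?_
  have hT := hA.inner_toEuclideanCLM_nonneg x
  have hβT := hAβ.inner_toEuclideanCLM_nonneg x
  simp only [map_sub, map_smul, map_one, _root_.sub_apply, _root_.smul_apply, one_apply_eq_self,
    inner_sub_right, inner_smul_right, real_inner_self_eq_norm_sq, sub_nonneg] at hβT
  rw [ContinuousLinearMap.rayleighQuotient, ContinuousLinearMap.reApplyInnerSelf_apply,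
    real_inner_comm, RCLike.re_to_real]
  rcases eq_or_ne x 0 with rfl | hx
  · simpa using hβ
  rwa [abs_of_nonneg (by positivity), div_le_iff₀ (by positivity)]

lemma l2_opNorm_inv_le {M : Matrix n n ℝ} (hM : IsUnit M.det) {c : ℝ} (hc : 0 < c)
    (h : ∀ x, c * ‖x‖ ^ 2 ≤ ⟪x, toEuclideanCLM (𝕜 := ℝ) M x⟫) : ‖M⁻¹‖ ≤ c⁻¹ := by
  rw [cstar_norm_def]
  refine ContinuousLinearMap.opNorm_le_bound _ (inv_nonneg.mpr hc.le) fun y => ?_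
  set x := toEuclideanCLM (𝕜 := ℝ) M⁻¹ y
  have hy : toEuclideanCLM (𝕜 := ℝ) M x = y := by
    rw [← mul_apply_eq_comp, ← map_mul, mul_nonsing_inv _ hM, map_one]; rfl
  have hxy : c * ‖x‖ ^ 2 ≤ ‖x‖ * ‖y‖ := (h x).trans (hy ▸ real_inner_le_norm x _)
  rw [inv_mul_eq_div, le_div_iff₀ hc]
  nlinarith [mul_le_mul_of_nonneg_left hxy hc.le, norm_nonneg y]

lemma PosSemidef.isUnit_det_add_smul_one {A : Matrix n n ℝ} (hA : A.PosSemidef) {c : ℝ}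
    (hc : 0 < c) : IsUnit (A + c • 1).det :=
  isUnit_iff_isUnit_det _ |>.mp (PosDef.posSemidef_add hA (PosDef.one.smul hc)).isUnit

lemma PosSemidef.l2_opNorm_inv_add_smul_one_le {A : Matrix n n ℝ} (hA : A.PosSemidef) {c : ℝ}
    (hc : 0 < c) : ‖(A + c • 1)⁻¹‖ ≤ c⁻¹ := by
  refine l2_opNorm_inv_le (hA.isUnit_det_add_smul_one hc) hc fun x => ?_
  simp only [map_add, map_smul, map_one, _root_.add_apply, _root_.smul_apply, one_apply_eq_self,
    inner_add_right, inner_smul_right, real_inner_self_eq_norm_sq]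
  linarith [hA.inner_toEuclideanCLM_nonneg x]

end Matrix

lemma specNorm_eq_norm {n : Type*} [Fintype n] [DecidableEq n] (A : Matrix n n ℝ) :
    specNorm A = ‖A‖ := rfl

theorem stmt_6 (N : ℕ) (hN : 0 < N) (K Lγ : Matrix (Fin N) (Fin N) ℝ)
    (hK : K.PosSemidef) (hLγ : Lγ.PosSemidef) (γ lam t : ℝ)
    (hγ : 0 < γ) (hlam : 0 < lam) (ht : t ∈ Set.Ioo (0 : ℝ) 1)
    (hlow : (K - Lγ).PosSemidef)
    (hup : (((N : ℝ) * γ / (1 - t)) • (1 : Matrix (Fin N) (Fin N) ℝ) - (K - Lγ)).PosSemidef) :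
    specNorm (K * (K + ((N : ℝ) * lam) • (1 : Matrix (Fin N) (Fin N) ℝ))⁻¹
        - Lγ * (Lγ + ((N : ℝ) * lam) • (1 : Matrix (Fin N) (Fin N) ℝ))⁻¹)
      ≤ (γ / lam) / (1 - t) := by
  set c : ℝ := (N : ℝ) * lam
  have hc : 0 < c := by positivity
  have h1t : 0 < 1 - t := sub_pos.mpr ht.2
  rw [specNorm_eq_norm, Matrix.mul_inv_add_smul_one_sub K Lγ c (hK.isUnit_det_add_smul_one hc)
    (hLγ.isUnit_det_add_smul_one hc), norm_smul, Real.norm_of_nonneg hc.le]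
  calc c * ‖(Lγ + c • 1)⁻¹ * (K - Lγ) * (K + c • 1)⁻¹‖
      ≤ c * (c⁻¹ * ((N : ℝ) * γ / (1 - t)) * c⁻¹) := by
        gcongr
        refine norm_mul₃_le.trans ?_
        gcongr
        · exact hLγ.l2_opNorm_inv_add_smul_one_le hc
        · exact hlow.l2_opNorm_le_of_smul_one_sub (by positivity) hup
        · exact hK.l2_opNorm_inv_add_smul_one_le hc
    _ = (γ / lam) / (1 - t) := by simp only [c]; field_simp
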